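/- For any index sets S ⊆ T and vertex m ∉ T of a discrete random vector, the KL divergence between the true joint P(X_T, X_m) and the approximation P(X_T) P(X_S, X_m) / P(X_S) equals I(X_T, X_m) − I(X_T) − [ I(X_S, X_m) − I(X_S) ], and this quantity is nonnegative; it is zero if and only if X_m is conditionally independent of X_{T∖S} given X_S. -/
import Mathlib

open scoped Classical BigOperators

namespace TCherryPaper
variable {d : ℕ} {Ω : Type} [Fintype Ω]

/-- Marginal of `p` on coordinates `S`, evaluated at a full configuration `y`. -/
noncomputable def marg (p : (Fin d → Ω) → ℝ) (S : Finset (Fin d)) (y : Fin d → Ω) : ℝ :=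
  ∑ x : Fin d → Ω, if ∀ i ∈ S, x i = y i then p x else 0

/-- Shannon entropy of the marginal of `p` on coordinates `S` (as `-E_p[log P(X_S)]`). -/
noncomputable def Hm (p : (Fin d → Ω) → ℝ) (S : Finset (Fin d)) : ℝ :=
  -∑ y : Fin d → Ω, p y * Real.log (marg p S y)

/-- Information content `I(X_S) = ∑_{i∈S} H(X_i) − H(X_S)`. -/
noncomputable def info (p : (Fin d → Ω) → ℝ) (S : Finset (Fin d)) : ℝ :=
  (∑ i ∈ S, Hm p {i}) - Hm p S

/-- Kullback–Leibler divergence. -/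
noncomputable def KL (p q : (Fin d → Ω) → ℝ) : ℝ :=
  ∑ y : Fin d → Ω, p y * Real.log (p y / q y)

def IsProb (p : (Fin d → Ω) → ℝ) : Prop := (∀ y, 0 ≤ p y) ∧ ∑ y, p y = 1

/-- The `j`-th running-intersection separator of an ordered list of clusters. -/
def sep (Cs : List (Finset (Fin d))) (j : ℕ) : Finset (Fin d) :=
  Cs.getD j ∅ ∩ (Cs.take j).foldr (· ∪ ·) ∅

/-- Running intersection property. -/
def RIP (Cs : List (Finset (Fin d))) : Prop :=
  ∀ j, 1 ≤ j → j < Cs.length → ∃ i < j, sep Cs j ⊆ Cs.getD i ∅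

/-- `𝒞` is the cluster set and `𝒮` the separator set of a junction tree. -/
def IsJunctionTree (𝒞 𝒮 : Finset (Finset (Fin d))) : Prop :=
  (∀ C₁ ∈ 𝒞, ∀ C₂ ∈ 𝒞, C₁ ⊆ C₂ → C₁ = C₂) ∧
  ∃ Cs : List (Finset (Fin d)), Cs ≠ [] ∧ Cs.Nodup ∧ Cs.toFinset = 𝒞 ∧ RIP Cs ∧
    𝒮 = (((List.range Cs.length).filter (fun j => 1 ≤ j)).map (sep Cs)).toFinset

/-- `ν_S`: the number of clusters containing `S`. -/
def nu (𝒞 : Finset (Finset (Fin d))) (S : Finset (Fin d)) : ℕ :=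
  (𝒞.filter (fun C => S ⊆ C)).card

/-- The junction tree probability distribution. -/
noncomputable def jtPD (p : (Fin d → Ω) → ℝ) (𝒞 𝒮 : Finset (Finset (Fin d)))
    (y : Fin d → Ω) : ℝ :=
  (∏ C ∈ 𝒞, marg p C y) / ∏ S ∈ 𝒮, (marg p S y) ^ (nu 𝒞 S - 1)

/-- Conditional independence of `X_A` and `X_B` given `X_C`. -/
def CI (p : (Fin d → Ω) → ℝ) (A B C : Finset (Fin d)) : Prop :=
  ∀ y, marg p (A ∪ B ∪ C) y * marg p C y = marg p (A ∪ C) y * marg p (B ∪ C) y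


lemma marg_pos (p : (Fin d → Ω) → ℝ) (hppos : ∀ y, 0 < p y) (A : Finset (Fin d))
    (y : Fin d → Ω) : 0 < marg p A y := by
  unfold marg
  refine Finset.sum_pos' (fun x _ => ?_) ⟨y, Finset.mem_univ y, ?_⟩
  · split <;> [exact (hppos x).le; exact le_rfl]
  · simp [hppos y]

lemma marg_congr (p : (Fin d → Ω) → ℝ) {A : Finset (Fin d)} {x y : Fin d → Ω}
    (h : ∀ i ∈ A, x i = y i) : marg p A x = marg p A y := by
  unfold marg
  refine Finset.sum_congr rfl fun z _ => ?_
  refine if_congr ⟨fun hz i hi => (hz i hi).trans (h i hi),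
    fun hz i hi => (hz i hi).trans (h i hi).symm⟩ rfl rfl

/-- canonical representative on coordinates `A` -/
def rho (ω₀ : Ω) (A : Finset (Fin d)) (y : Fin d → Ω) : Fin d → Ω :=
  fun i => if i ∈ A then y i else ω₀

lemma rho_idem (ω₀ : Ω) (A : Finset (Fin d)) (y : Fin d → Ω) :
    rho ω₀ A (rho ω₀ A y) = rho ω₀ A y := by
  funext i; unfold rho; split <;> simp_all

lemma rho_eq_iff (ω₀ : Ω) (A : Finset (Fin d)) {c y : Fin d → Ω}
    (hc : rho ω₀ A c = c) : rho ω₀ A y = c ↔ ∀ i ∈ A, y i = c i := by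
  constructor
  · intro h i hi
    rw [← h]; simp [rho, hi]
  · intro h
    funext i
    by_cases hi : i ∈ A
    · simp [rho, hi, h i hi]
    · have : c i = ω₀ := by rw [← hc]; simp [rho, hi]
      simp [rho, hi, this]

lemma sum_fiber (ω₀ : Ω) (A : Finset (Fin d)) (f : (Fin d → Ω) → ℝ) :
    ∑ y : Fin d → Ω, f y =
      ∑ c ∈ Finset.univ.filter (fun c => rho ω₀ A c = c),
        ∑ y ∈ Finset.univ.filter (fun y => rho ω₀ A y = c), f y :=
  (Finset.sum_fiberwise_of_maps_to
    (fun y _ => Finset.mem_filter.mpr ⟨Finset.mem_univ _, rho_idem ω₀ A y⟩) f).symm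

lemma fiber_sum_p (ω₀ : Ω) (A : Finset (Fin d)) (p : (Fin d → Ω) → ℝ)
    {c : Fin d → Ω} (hc : rho ω₀ A c = c) :
    ∑ y ∈ Finset.univ.filter (fun y => rho ω₀ A y = c), p y = marg p A c := by
  unfold marg
  rw [Finset.sum_filter]
  refine Finset.sum_congr rfl fun y _ => ?_
  refine if_congr (rho_eq_iff ω₀ A hc) rfl rfl

/-- For `g` depending only on coordinates in `A`:
`∑ y, p y * g y / marg p A y = ∑ c canonical, g c`. -/
lemma sum_div_marg (ω₀ : Ω) (A : Finset (Fin d)) (p g : (Fin d → Ω) → ℝ)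
    (hppos : ∀ y, 0 < p y)
    (hg : ∀ x y : Fin d → Ω, (∀ i ∈ A, x i = y i) → g x = g y) :
    ∑ y : Fin d → Ω, p y * g y / marg p A y =
      ∑ c ∈ Finset.univ.filter (fun c => rho ω₀ A c = c), g c := by
  rw [sum_fiber ω₀ A (fun y => p y * g y / marg p A y)]
  refine Finset.sum_congr rfl fun c hc => ?_
  have hc' : rho ω₀ A c = c := (Finset.mem_filter.mp hc).2
  have step : ∀ y ∈ Finset.univ.filter (fun y => rho ω₀ A y = c),
      p y * g y / marg p A y = p y * (g c / marg p A c) := by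
    intro y hy
    have hyc : ∀ i ∈ A, y i = c i := (rho_eq_iff ω₀ A hc').mp (Finset.mem_filter.mp hy).2
    rw [hg y c hyc, marg_congr p hyc]; ring
  rw [Finset.sum_congr rfl step, ← Finset.sum_mul, fiber_sum_p ω₀ A p hc']
  field_simp [(marg_pos p hppos A c).ne']

lemma sum_marg_canonical (ω₀ : Ω) (A : Finset (Fin d)) (p : (Fin d → Ω) → ℝ) :
    ∑ c ∈ Finset.univ.filter (fun c => rho ω₀ A c = c), marg p A c
      = ∑ y : Fin d → Ω, p y := by
  rw [sum_fiber ω₀ A p]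
  exact Finset.sum_congr rfl fun c hc =>
    (fiber_sum_p ω₀ A p (Finset.mem_filter.mp hc).2).symm

lemma gibbs {ι : Type} [Fintype ι] (p q : ι → ℝ) (hp : ∀ i, 0 < p i) (hq : ∀ i, 0 < q i)
    (hpq : ∑ i, q i = ∑ i, p i) :
    0 ≤ ∑ i, p i * Real.log (p i / q i) ∧
      ((∑ i, p i * Real.log (p i / q i)) = 0 ↔ ∀ i, p i = q i) := by
  have key : ∀ i, p i * Real.log (p i / q i)
      = p i * ((q i / p i - 1) - Real.log (q i / p i)) - (q i - p i) := by
    intro i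
    have hpi : p i ≠ 0 := (hp i).ne'
    rw [Real.log_div (hp i).ne' (hq i).ne', Real.log_div (hq i).ne' hpi]
    field_simp
    ring
  have hnn : ∀ i, 0 ≤ p i * ((q i / p i - 1) - Real.log (q i / p i)) := fun i =>
    mul_nonneg (hp i).le (by
      linarith [Real.log_le_sub_one_of_pos (div_pos (hq i) (hp i))])
  have hsum : ∑ i, p i * Real.log (p i / q i)
      = ∑ i, p i * ((q i / p i - 1) - Real.log (q i / p i)) := by
    have h1 : ∑ i, p i * Real.log (p i / q i)
        = ∑ i, (p i * ((q i / p i - 1) - Real.log (q i / p i)) - (q i - p i)) :=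
      Finset.sum_congr rfl fun i _ => key i
    rw [h1, Finset.sum_sub_distrib, Finset.sum_sub_distrib, hpq, sub_self, sub_zero]
  constructor
  · rw [hsum]; exact Finset.sum_nonneg fun i _ => hnn i
  · rw [hsum, Finset.sum_eq_zero_iff_of_nonneg (fun i _ => hnn i)]
    constructor
    · intro h i
      have h0 := h i (Finset.mem_univ i)
      have h1 : (q i / p i - 1) - Real.log (q i / p i) = 0 := by
        rcases mul_eq_zero.mp h0 with h' | h'
        · exact absurd h' (hp i).ne'
        · exact h'
      have h2 : q i / p i = 1 := by
        by_contra hne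
        have := Real.log_lt_sub_one_of_pos (div_pos (hq i) (hp i)) hne
        linarith
      exact ((div_eq_one_iff_eq (hp i).ne').mp h2).symm
    · intro h i _
      rw [h i]
      have : q i / q i = 1 := div_self (hq i).ne'
      rw [this, Real.log_one]
      ring


/-- for `S ⊆ T` and `m ∉ T`, the KL divergence between the true joint
`P(X_T, X_m)` and the approximation `P(X_T) P(X_S, X_m) / P(X_S)` (computed as the
expectation under `p` of the log-ratio, which only depends on the coordinates `T ∪ {m}`)
equals `I(X_T, X_m) − I(X_T) − [I(X_S, X_m) − I(X_S)]`; this quantity is nonnegative, and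
it is zero iff `X_m` is conditionally independent of `X_{T∖S}` given `X_S`. -/
theorem KL_approx_through_subset
    {d : ℕ} {Ω : Type} [Fintype Ω] (p : (Fin d → Ω) → ℝ)
    (hp : IsProb p) (hppos : ∀ y, 0 < p y)
    (T S : Finset (Fin d)) (hST : S ⊆ T) (m : Fin d) (hm : m ∉ T) :
    (∑ y : Fin d → Ω, p y * Real.log
        (marg p (insert m T) y / (marg p T y * marg p (insert m S) y / marg p S y)))
      = info p (insert m T) - info p T - (info p (insert m S) - info p S) ∧
    0 ≤ info p (insert m T) - info p T - (info p (insert m S) - info p S) ∧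
    (info p (insert m T) - info p T - (info p (insert m S) - info p S) = 0 ↔
      ∀ y, marg p (insert m T) y = marg p T y * marg p (insert m S) y / marg p S y) := by
  classical
  have hmS : m ∉ S := fun h => hm (hST h)
  have mpos : ∀ (A : Finset (Fin d)) (y : Fin d → Ω), 0 < marg p A y :=
    fun A y => marg_pos p hppos A y
  -- Part 1: algebraic identity
  have part1 : (∑ y : Fin d → Ω, p y * Real.log
        (marg p (insert m T) y / (marg p T y * marg p (insert m S) y / marg p S y)))
      = info p (insert m T) - info p T - (info p (insert m S) - info p S) := by
    have hlog : ∀ y : Fin d → Ω,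
        p y * Real.log (marg p (insert m T) y / (marg p T y * marg p (insert m S) y / marg p S y))
        = p y * Real.log (marg p (insert m T) y) - p y * Real.log (marg p T y)
          - p y * Real.log (marg p (insert m S) y) + p y * Real.log (marg p S y) := by
      intro y
      rw [Real.log_div (mpos (insert m T) y).ne'
            (div_pos (mul_pos (mpos T y) (mpos (insert m S) y)) (mpos S y)).ne',
          Real.log_div (mul_pos (mpos T y) (mpos (insert m S) y)).ne' (mpos S y).ne',
          Real.log_mul (mpos T y).ne' (mpos (insert m S) y).ne']
      ring
    rw [Finset.sum_congr rfl fun y _ => hlog y]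
    rw [Finset.sum_add_distrib, Finset.sum_sub_distrib, Finset.sum_sub_distrib]
    unfold info Hm
    rw [Finset.sum_insert hm, Finset.sum_insert hmS]
    ring
  -- nonempty Ω
  have hne : Nonempty (Fin d → Ω) := by
    by_contra h
    rw [not_nonempty_iff] at h
    have h2 := hp.2
    rw [Finset.univ_eq_empty, Finset.sum_empty] at h2
    exact zero_ne_one h2
  obtain ⟨y₀⟩ := hne
  set ω₀ : Ω := y₀ m with hω₀
  -- the approximating density ratio
  set g : (Fin d → Ω) → ℝ :=
    fun y => marg p T y * marg p (insert m S) y / marg p S y with hgdef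
  have gpos : ∀ y, 0 < g y := fun y =>
    div_pos (mul_pos (mpos T y) (mpos (insert m S) y)) (mpos S y)
  set q : (Fin d → Ω) → ℝ := fun y => p y * g y / marg p (insert m T) y with hqdef
  have hqpos : ∀ y, 0 < q y := fun y =>
    div_pos (mul_pos (hppos y) (gpos y)) (mpos (insert m T) y)
  -- g depends only on coordinates in insert m T
  have hgE : ∀ x y : Fin d → Ω, (∀ i ∈ insert m T, x i = y i) → g x = g y := by
    intro x y h
    have hT' : ∀ i ∈ T, x i = y i := fun i hi => h i (Finset.mem_insert_of_mem hi)
    have hS' : ∀ i ∈ S, x i = y i := fun i hi => hT' i (hST hi)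
    have hF' : ∀ i ∈ insert m S, x i = y i := by
      intro i hi
      rcases Finset.mem_insert.mp hi with hi' | hi'
      · rw [hi']; exact h m (Finset.mem_insert_self m T)
      · exact hS' i hi'
    simp only [hgdef]
    rw [marg_congr p hT', marg_congr p hS', marg_congr p hF']
  -- ∑ q = 1
  have hsumq : ∑ y, q y = 1 := by
    have h1 : ∑ y, q y =
        ∑ c ∈ Finset.univ.filter (fun c => rho ω₀ (insert m T) c = c), g c :=
      sum_div_marg ω₀ (insert m T) p g hppos hgE
    have hmap : ∀ c ∈ Finset.univ.filter (fun c => rho ω₀ (insert m T) c = c),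
        rho ω₀ T c ∈ Finset.univ.filter (fun c => rho ω₀ T c = c) := fun c _ =>
      Finset.mem_filter.mpr ⟨Finset.mem_univ _, rho_idem ω₀ T c⟩
    have h2 : ∑ c ∈ Finset.univ.filter (fun c => rho ω₀ (insert m T) c = c), g c
        = ∑ b ∈ Finset.univ.filter (fun c => rho ω₀ T c = c), marg p T b := by
      rw [← Finset.sum_fiberwise_of_maps_to hmap g]
      refine Finset.sum_congr rfl fun b hb => ?_
      have hbT : rho ω₀ T b = b := (Finset.mem_filter.mp hb).2
      have hbm : b m = ω₀ := by
        conv_lhs => rw [← hbT]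
        simp [rho, hm]
      have hfib : (Finset.univ.filter (fun c => rho ω₀ (insert m T) c = c)).filter
            (fun c => rho ω₀ T c = b)
          = Finset.univ.image (fun ω : Ω => Function.update b m ω) := by
        ext c
        simp only [Finset.mem_filter, Finset.mem_image, Finset.mem_univ, true_and]
        constructor
        · rintro ⟨hcE, hcT⟩
          refine ⟨c m, ?_⟩
          funext i
          by_cases him : i = m
          · subst him; simp
          · rw [Function.update_of_ne him, ← hcT]
            by_cases hiT : i ∈ T
            · simp [rho, hiT]
            · have hcω : c i = ω₀ := by
                conv_lhs => rw [← hcE]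
                simp [rho, Finset.mem_insert, him, hiT]
              simp [rho, hiT, hcω]
        · rintro ⟨ω, rfl⟩
          constructor
          · funext i
            by_cases him : i = m
            · subst him; simp [rho]
            · rw [Function.update_of_ne him]
              by_cases hiT : i ∈ T
              · simp [rho, Finset.mem_insert, hiT, Function.update_of_ne him]
              · have hbω : b i = ω₀ := by
                  conv_lhs => rw [← hbT]; simp [rho, hiT]
                simp [rho, Finset.mem_insert, him, hiT, Function.update_of_ne him, hbω]
          · funext i
            by_cases him : i = m
            · subst him; simp [rho, hm, hbm]
            · rw [← hbT]
              by_cases hiT : i ∈ T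
              · simp [rho, hiT, Function.update_of_ne him]
              · simp [rho, hiT]
      rw [hfib, Finset.sum_image (by
        intro ω _ ω' _ hupd
        have := congrFun hupd m
        simpa using this)]
      have hgb : ∀ ω : Ω, g (Function.update b m ω)
          = marg p T b * marg p (insert m S) (Function.update b m ω) / marg p S b := by
        intro ω
        have hT' : ∀ i ∈ T, Function.update b m ω i = b i := fun i hi =>
          Function.update_of_ne (fun h => hm (by rw [← h]; exact hi)) _ _
        have hS' : ∀ i ∈ S, Function.update b m ω i = b i := fun i hi => hT' i (hST hi)
        simp only [hgdef]
        rw [marg_congr p hT', marg_congr p hS']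
      rw [Finset.sum_congr rfl fun ω _ => hgb ω]
      have hkey : ∑ ω : Ω, marg p (insert m S) (Function.update b m ω) = marg p S b := by
        unfold marg
        rw [Finset.sum_comm]
        refine Finset.sum_congr rfl fun z _ => ?_
        have hcond : ∀ ω : Ω, (∀ i ∈ insert m S, z i = Function.update b m ω i)
            ↔ (z m = ω ∧ ∀ i ∈ S, z i = b i) := by
          intro ω
          rw [Finset.forall_mem_insert]
          constructor
          · rintro ⟨h1, h2⟩
            exact ⟨by simpa using h1, fun i hi => by
              have h3 := h2 i hi
              rwa [Function.update_of_ne (fun h => hmS (by rw [← h]; exact hi))] at h3⟩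
          · rintro ⟨h1, h2⟩
            refine ⟨by simpa using h1, fun i hi => ?_⟩
            rw [Function.update_of_ne (fun h => hmS (by rw [← h]; exact hi))]
            exact h2 i hi
        rw [Finset.sum_congr rfl fun ω _ => if_congr (hcond ω) rfl rfl]
        by_cases hC : ∀ i ∈ S, z i = b i
        · rw [if_pos hC]
          have hstep : ∀ ω : Ω, (if (z m = ω ∧ ∀ i ∈ S, z i = b i) then p z else 0)
              = (if z m = ω then p z else 0) := fun ω => if_congr (and_iff_left hC) rfl rfl
          rw [Finset.sum_congr rfl fun ω _ => hstep ω, Finset.sum_ite_eq,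
            if_pos (Finset.mem_univ _)]
        · rw [if_neg hC]
          exact Finset.sum_eq_zero fun ω _ => if_neg (fun hand => hC hand.2)
      rw [← Finset.sum_div, ← Finset.mul_sum, hkey,
        mul_div_assoc, div_self (mpos S b).ne', mul_one]
    rw [h1, h2, sum_marg_canonical ω₀ T p, hp.2]
  -- connect to gibbs
  have gib := gibbs p q hppos hqpos (by rw [hsumq, hp.2])
  have hratio : ∀ y, p y * Real.log
      (marg p (insert m T) y / (marg p T y * marg p (insert m S) y / marg p S y))
      = p y * Real.log (p y / q y) := by
    intro y
    congr 2
    have h1 : q y = p y * g y / marg p (insert m T) y := rfl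
    conv_rhs => rw [h1, div_div_eq_mul_div,
      mul_div_mul_left (marg p (insert m T) y) (g y) (hppos y).ne']
  have hsum_eq : (∑ y : Fin d → Ω, p y * Real.log
        (marg p (insert m T) y / (marg p T y * marg p (insert m S) y / marg p S y)))
      = ∑ y, p y * Real.log (p y / q y) :=
    Finset.sum_congr rfl fun y _ => hratio y
  have hiff : (∀ y, p y = q y) ↔
      ∀ y, marg p (insert m T) y = marg p T y * marg p (insert m S) y / marg p S y := by
    constructor <;> intro h y
    · have h' := (h y).symm
      simp only [hqdef, hgdef] at h'
      rw [div_eq_iff (mpos (insert m T) y).ne'] at h'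
      have h2 : p y * (marg p T y * marg p (insert m S) y / marg p S y)
          = p y * marg p (insert m T) y := h'
      have := mul_left_cancel₀ (hppos y).ne' h2
      exact this.symm
    · have h1 : q y = p y * (marg p T y * marg p (insert m S) y / marg p S y)
          / marg p (insert m T) y := rfl
      rw [h1, ← h y, mul_div_assoc, div_self (mpos (insert m T) y).ne', mul_one]
  refine ⟨part1, ?_, ?_⟩
  · rw [← part1, hsum_eq]; exact gib.1
  · rw [← part1, hsum_eq, gib.2]
    exact hiff
end TCherryPaper
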